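/- Let b and s be integers with 2 ≤ b < s, and define M̂(x) = ((1+x)^s − 1)/b for x ≥ 0. Then: (a) for every λ > 0 there is a constant C > 0 such that for all n ∈ ℕ and all 0 ≤ x ≤ λ, the derivative of the function x ↦ M̂^n(x·(b/s)^n) is at most C; (b) for all x ≥ 0 and all n ∈ ℕ, the derivative of x ↦ M̂^n(x·(b/s)^n) is at most (s/b)·exp{ ((s−1)/(1−b/s))·M̂^n(x·(b/s)^n) }. -/

import Mathlib

/-!
Write `q = b / s`, `f n x = M̂^[n] (x * q ^ n)` and `z k = M̂^[k] (x * q ^ n)`. By the chain rule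
`(f n)' x = ∏_{k<n} (1 + z k) ^ (s - 1) ≤ exp ((s - 1) ∑_{k<n} z k)`, and since `M̂ u ≥ u / q`
the orbit grows at least geometrically, so `∑_{k<n} z k ≤ z n / (1 - q)`: this is (b).

For (a), read (b) as a differential inequality `(f n)' ≤ A exp (K f n)` with `f n 0 = 0`, where
`A = s / b` and `K = (s - 1) / (1 - q)`:
`exp (-K f n) + A K x` is nondecreasing, which bounds `f n` by `1 / K` on an interval `[0, δ]`
independent of `n`. Since `f n ≤ f (m + n)` and `f (m + n) x = M̂^[m] (f n (x q ^ m))`, choosing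
`m` with `λ q ^ m ≤ δ` bounds `f n` on `[0, λ]` by `M̂^[m] (1 / K)`, and (b) turns this into a
bound on the derivative.
-/

open Finset Real Set

theorem MonotoneOn.iterate {α : Type*} [Preorder α] {f : α → α} {S : Set α}
    (hf : MonotoneOn f S) (hS : MapsTo f S S) (n : ℕ) : MonotoneOn f^[n] S := by
  induction n with
  | zero => exact monotoneOn_id
  | succ n ih => exact fun x hx y hy hxy => ih (hS hx) (hS hy) (hf hx hy hxy)

section Iterate

variable {T : ℝ → ℝ} {r : ℝ}

theorem sub_one_mul_sum_iterate_le (hr : 0 ≤ r) (hT : ∀ u, 0 ≤ u → r * u ≤ T u) (n : ℕ)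
    {x : ℝ} (hx : 0 ≤ x) : (r - 1) * ∑ k ∈ range n, T^[k] x ≤ T^[n] x := by
  have hT₀ : MapsTo T (Ici 0) (Ici 0) := fun u hu => (mul_nonneg hr hu).trans (hT u hu)
  induction n with
  | zero => simpa using hx
  | succ n ih =>
    rw [sum_range_succ, Function.iterate_succ_apply']
    linarith [hT _ (hT₀.iterate n hx)]

theorem hasDerivAt_iterate {T' : ℝ → ℝ} (hT : ∀ u, HasDerivAt T (T' u) u) (n : ℕ) (x : ℝ) :
    HasDerivAt T^[n] (∏ k ∈ range n, T' (T^[k] x)) x := by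
  induction n with
  | zero => simpa using hasDerivAt_id x
  | succ n ih =>
    rw [prod_range_succ, mul_comm, Function.iterate_succ']
    exact (hT _).comp x ih

end Iterate

def rescaledIterate (T : ℝ → ℝ) (q : ℝ) (n : ℕ) (x : ℝ) : ℝ := T^[n] (x * q ^ n)

section Rescaled

variable {T : ℝ → ℝ} {q : ℝ}

theorem rescaledIterate_add (m n : ℕ) (x : ℝ) :
    rescaledIterate T q (m + n) x = T^[m] (rescaledIterate T q n (x * q ^ m)) := by
  simp only [rescaledIterate, Function.iterate_add_apply, pow_add, mul_assoc]

theorem rescaledIterate_le_succ (hq : 0 ≤ q) (hT₀ : MapsTo T (Ici 0) (Ici 0))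
    (hmono : MonotoneOn T (Ici 0)) (hT : ∀ u, 0 ≤ u → u ≤ T (u * q)) (n : ℕ) {x : ℝ}
    (hx : 0 ≤ x) : rescaledIterate T q n x ≤ rescaledIterate T q (n + 1) x := by
  have hxq : 0 ≤ x * q ^ n := by positivity
  rw [rescaledIterate, rescaledIterate, Function.iterate_succ_apply, pow_succ, ← mul_assoc]
  exact hmono.iterate hT₀ n hxq (hT₀ (mul_nonneg hxq hq)) (hT _ hxq)

theorem rescaledIterate_apply_zero (hT : T 0 = 0) (n : ℕ) : rescaledIterate T q n 0 = 0 := by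
  rw [rescaledIterate, zero_mul, Function.iterate_fixed hT]

theorem hasDerivAt_rescaledIterate {T' : ℝ → ℝ} (hT : ∀ u, HasDerivAt T (T' u) u) (n : ℕ)
    (x : ℝ) : HasDerivAt (rescaledIterate T q n)
      (q ^ n * ∏ k ∈ range n, T' (T^[k] (x * q ^ n))) x := by
  rw [mul_comm]
  exact (hasDerivAt_iterate hT n _).comp x (hasDerivAt_mul_const _)

end Rescaled

theorem exp_neg_mul_le_of_deriv_le_mul_exp {f : ℝ → ℝ} {A K : ℝ} (hK : 0 ≤ K)
    (hf : Differentiable ℝ f) (hf' : ∀ x, 0 ≤ x → deriv f x ≤ A * exp (K * f x)) {x : ℝ}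
    (hx : 0 ≤ x) : exp (-(K * f 0)) ≤ exp (-(K * f x)) + A * K * x := by
  let g y := exp (-(K * f y)) + A * K * y
  have hg (y : ℝ) : HasDerivAt g (A * K - K * (deriv f y * exp (-(K * f y)))) y :=
    ((((hf y).hasDerivAt.const_mul K).neg.exp).add
      ((hasDerivAt_id y).const_mul (A * K))).congr_deriv
      (by simp only [Pi.neg_apply, mul_neg, mul_one]; ring)
  have hg_mono : MonotoneOn g (Ici 0) := by
    refine monotoneOn_of_hasDerivWithinAt_nonneg (convex_Ici 0)
      (fun y _ => (hg y).continuousAt.continuousWithinAt) (fun y _ => (hg y).hasDerivWithinAt) ?_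
    intro y hy
    rw [interior_Ici] at hy
    have : deriv f y * exp (-(K * f y)) ≤ A := calc
      _ ≤ A * exp (K * f y) * exp (-(K * f y)) := by gcongr; exact hf' y (le_of_lt hy)
      _ = A := by rw [mul_assoc, ← exp_add, add_neg_cancel, exp_zero, mul_one]
    nlinarith [mul_le_mul_of_nonneg_left this hK]
  simpa [g] using hg_mono self_mem_Ici hx hx

theorem prod_one_add_pow_le_exp_mul_sum {ι : Type*} (S : Finset ι) {z : ι → ℝ}
    (hz : ∀ i ∈ S, 0 ≤ z i) (m : ℕ) : ∏ i ∈ S, (1 + z i) ^ m ≤ exp (m * ∑ i ∈ S, z i) := by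
  calc ∏ i ∈ S, (1 + z i) ^ m ≤ ∏ i ∈ S, exp (z i) ^ m := by
        refine prod_le_prod (fun i hi => pow_nonneg (by linarith [hz i hi]) m) fun i hi => ?_
        have := hz i hi
        gcongr
        linarith [add_one_le_exp (z i)]
    _ = exp (m * ∑ i ∈ S, z i) := by rw [Finset.prod_pow, ← exp_sum, ← exp_nat_mul]

noncomputable def mhat (b s : ℕ) (x : ℝ) : ℝ := ((1 + x) ^ s - 1) / b

section Mhat

variable {b s : ℕ}

theorem mhat_zero : mhat b s 0 = 0 := by simp [mhat]

theorem mapsTo_mhat : MapsTo (mhat b s) (Ici 0) (Ici 0) := by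
  intro x (hx : 0 ≤ x)
  rw [Set.mem_Ici, mhat]
  have := one_le_pow₀ (M₀ := ℝ) (n := s) (by linarith : 1 ≤ 1 + x)
  exact div_nonneg (by linarith) b.cast_nonneg

theorem mul_le_mhat {x : ℝ} (hx : 0 ≤ x) : (s / b : ℝ) * x ≤ mhat b s x := by
  rw [mhat, div_mul_eq_mul_div]
  gcongr
  linarith [one_add_mul_le_pow (by linarith : (-2 : ℝ) ≤ x) s]

theorem mhat_monotoneOn : MonotoneOn (mhat b s) (Ici 0) := by
  intro x hx y _ hxy
  unfold mhat
  gcongr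
  exact add_nonneg zero_le_one hx

theorem hasDerivAt_mhat (x : ℝ) : HasDerivAt (mhat b s) (s / b * (1 + x) ^ (s - 1)) x :=
  ((((hasDerivAt_id x).const_add 1).pow s).sub_const 1).div_const (b : ℝ) |>.congr_deriv
    (by simp only [id_eq, mul_one]; ring)

theorem deriv_rescaledIterate_mhat (hb : b ≠ 0) (hs : s ≠ 0) (n : ℕ) (x : ℝ) :
    deriv (rescaledIterate (mhat b s) (b / s) n) x
      = ∏ k ∈ range n, (1 + (mhat b s)^[k] (x * (b / s) ^ n)) ^ (s - 1) := by
  have hqr : (b / s : ℝ) * (s / b) = 1 := by field_simp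
  rw [(hasDerivAt_rescaledIterate hasDerivAt_mhat n x).deriv, prod_mul_distrib, prod_const,
    card_range, ← mul_assoc, ← mul_pow, hqr, one_pow, one_mul]

theorem deriv_rescaledIterate_mhat_le (hb : 0 < b) (hbs : b < s) (n : ℕ) {x : ℝ} (hx : 0 ≤ x) :
    deriv (rescaledIterate (mhat b s) (b / s) n) x
      ≤ s / b * exp ((s - 1) / (1 - b / s) * rescaledIterate (mhat b s) (b / s) n x) := by
  set q : ℝ := b / s
  set z : ℕ → ℝ := fun k => (mhat b s)^[k] (x * q ^ n)
  have hbR : (0 : ℝ) < b := by exact_mod_cast hb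
  have hbsR : (b : ℝ) < s := by exact_mod_cast hbs
  have hsR : (0 : ℝ) < s := hbR.trans hbsR
  have hq : q < 1 := (div_lt_one hsR).mpr hbsR
  have hxq : 0 ≤ x * q ^ n := by positivity
  have hz : ∀ k, 0 ≤ z k := fun k => mapsTo_mhat.iterate k hxq
  have hsum : (s / b - 1) * ∑ k ∈ range n, z k ≤ z n :=
    sub_one_mul_sum_iterate_le (by positivity) (fun _ => mul_le_mhat) n hxq
  have hsum' : (1 - q) * ∑ k ∈ range n, z k ≤ z n := by
    have hsq : q * (s / b - 1) = 1 - q := by simp only [q]; field_simp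
    nlinarith [sum_nonneg fun k (_ : k ∈ range n) => hz k, hz n,
      mul_le_mul_of_nonneg_left hsum (by positivity : 0 ≤ q)]
  have hexp : ((s - 1 : ℕ) : ℝ) * ∑ k ∈ range n, z k ≤ (s - 1) / (1 - q) * z n := by
    have hs : (0 : ℝ) ≤ s - 1 := sub_nonneg.mpr (Nat.one_le_cast.mpr (by omega))
    rw [Nat.cast_pred (by omega), div_mul_eq_mul_div, le_div_iff₀ (by linarith)]
    linarith [mul_le_mul_of_nonneg_left hsum' hs]
  rw [deriv_rescaledIterate_mhat hb.ne' (by omega)]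
  calc ∏ k ∈ range n, (1 + z k) ^ (s - 1)
      ≤ exp (((s - 1 : ℕ) : ℝ) * ∑ k ∈ range n, z k) :=
        prod_one_add_pow_le_exp_mul_sum _ (fun k _ => hz k) _
    _ ≤ exp ((s - 1) / (1 - q) * z n) := exp_le_exp.mpr hexp
    _ ≤ s / b * exp ((s - 1) / (1 - q) * z n) :=
        le_mul_of_one_le_left (exp_pos _).le ((one_le_div hbR).mpr hbsR.le)

theorem sub_one_div_one_sub_div_pos (hb : 0 < b) (hbs : b < s) :
    0 < ((s : ℝ) - 1) / (1 - b / s) := by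
  have hbR : (1 : ℝ) ≤ b := by exact_mod_cast hb
  have hbsR : (b : ℝ) < s := by exact_mod_cast hbs
  exact div_pos (by linarith) (sub_pos.mpr ((div_lt_one (by linarith)).mpr hbsR))

theorem rescaledIterate_mhat_le_of_small (hb : 0 < b) (hbs : b < s) (n : ℕ) {x : ℝ}
    (hx : 0 ≤ x) (hsmall : 2 * (s / b) * ((s - 1) / (1 - b / s)) * x ≤ 1) :
    rescaledIterate (mhat b s) (b / s) n x ≤ 1 / ((s - 1) / (1 - b / s)) := by
  set K : ℝ := (s - 1) / (1 - b / s)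
  set f := rescaledIterate (mhat b s) (b / s) n
  have hK : 0 < K := sub_one_div_one_sub_div_pos hb hbs
  have hcmp := exp_neg_mul_le_of_deriv_le_mul_exp hK.le
    (fun y => (hasDerivAt_rescaledIterate hasDerivAt_mhat n y).differentiableAt)
    (fun y hy => deriv_rescaledIterate_mhat_le hb hbs n hy) hx
  rw [rescaledIterate_apply_zero mhat_zero, mul_zero, neg_zero, exp_zero] at hcmp
  have hinv : exp (K * f x) * exp (-(K * f x)) = 1 := by rw [← exp_add, add_neg_cancel, exp_zero]
  rw [le_div_iff₀ hK, mul_comm]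
  nlinarith [add_one_le_exp (K * f x), exp_pos (K * f x)]

theorem exists_forall_rescaledIterate_mhat_le (hb : 0 < b) (hbs : b < s) (lam : ℝ) :
    ∃ Z, ∀ n : ℕ, ∀ x, 0 ≤ x → x ≤ lam → rescaledIterate (mhat b s) (b / s) n x ≤ Z := by
  set q : ℝ := b / s
  set c : ℝ := 2 * (s / b) * ((s - 1) / (1 - b / s))
  have hbR : (0 : ℝ) < b := by exact_mod_cast hb
  have hbsR : (b : ℝ) < s := by exact_mod_cast hbs
  have hq : q < 1 := (div_lt_one (hbR.trans hbsR)).mpr hbsR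
  have hc : 0 ≤ c := by have := sub_one_div_one_sub_div_pos hb hbs; positivity
  obtain ⟨m, hm⟩ := (((tendsto_pow_atTop_nhds_zero_of_lt_one (by positivity) hq).const_mul
    (c * lam)).eventually (gt_mem_nhds (show c * lam * 0 < 1 by simp))).exists
  have hstep (u : ℝ) (hu : 0 ≤ u) : u ≤ mhat b s (u * q) := by
    have := mul_le_mhat (b := b) (s := s) (mul_nonneg hu (by positivity : 0 ≤ q))
    rwa [mul_left_comm, div_mul_div_cancel₀ hbR.ne', div_self (by linarith), mul_one] at this
  refine ⟨(mhat b s)^[m] (1 / ((s - 1) / (1 - b / s))), fun n x hx hxl => ?_⟩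
  have hxq : 0 ≤ x * q ^ m := by positivity
  calc rescaledIterate (mhat b s) q n x ≤ rescaledIterate (mhat b s) q (m + n) x :=
        monotone_nat_of_le_succ (f := fun k => rescaledIterate (mhat b s) q k x)
          (fun k => rescaledIterate_le_succ (by positivity) mapsTo_mhat mhat_monotoneOn
            hstep k hx) (by omega)
    _ = (mhat b s)^[m] (rescaledIterate (mhat b s) q n (x * q ^ m)) := rescaledIterate_add m n x
    _ ≤ (mhat b s)^[m] (1 / ((s - 1) / (1 - b / s))) := by
        refine mhat_monotoneOn.iterate mapsTo_mhat m
          (mapsTo_mhat.iterate n (Set.mem_Ici.mpr (by positivity))) ?_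
          (rescaledIterate_mhat_le_of_small hb hbs n hxq ?_)
        · exact Set.mem_Ici.mpr (one_div_nonneg.mpr (sub_one_div_one_sub_div_pos hb hbs).le)
        · calc c * (x * q ^ m) ≤ c * (lam * q ^ m) := by gcongr
            _ ≤ 1 := by rw [← mul_assoc]; exact hm.le

end Mhat

/-- For `2 ≤ b < s` and `M̂(x) = ((1+x)^s − 1)/b`:
(a) for every `λ > 0` there is `C > 0` bounding the derivative of
`x ↦ M̂^[n](x·(b/s)^n)` on `[0, λ]`, uniformly in `n`;
(b) for all `x ≥ 0` and all `n`, this derivative is at most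
`(s/b)·exp(((s−1)/(1−b/s))·M̂^[n](x·(b/s)^n))`. -/
theorem stmt8 (b s : ℕ) (hb : 2 ≤ b) (hbs : b < s)
    (Mhat : ℝ → ℝ) (hMhat : ∀ x : ℝ, Mhat x = ((1 + x) ^ s - 1) / b) :
    (∀ lam : ℝ, 0 < lam → ∃ C : ℝ, 0 < C ∧
      ∀ n : ℕ, ∀ x : ℝ, 0 ≤ x → x ≤ lam →
        deriv (fun y : ℝ => Mhat^[n] (y * ((b : ℝ) / s) ^ n)) x ≤ C) ∧
    (∀ n : ℕ, ∀ x : ℝ, 0 ≤ x →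
      deriv (fun y : ℝ => Mhat^[n] (y * ((b : ℝ) / s) ^ n)) x
        ≤ ((s : ℝ) / b) *
          Real.exp ((((s : ℝ) - 1) / (1 - (b : ℝ) / s)) *
            Mhat^[n] (x * ((b : ℝ) / s) ^ n))) := by
  obtain rfl : Mhat = mhat b s := funext hMhat
  have hb₀ : 0 < b := by omega
  refine ⟨fun lam _ => ?_, fun n x hx => deriv_rescaledIterate_mhat_le hb₀ hbs n hx⟩
  obtain ⟨Z, hZ⟩ := exists_forall_rescaledIterate_mhat_le hb₀ hbs lam
  have hbR : (0 : ℝ) < b := by exact_mod_cast hb₀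
  have hsR : (0 : ℝ) < s := by exact_mod_cast hb₀.trans hbs
  refine ⟨s / b * exp ((s - 1) / (1 - b / s) * Z), by positivity, fun n x hx hxl => ?_⟩
  refine (deriv_rescaledIterate_mhat_le hb₀ hbs n hx).trans ?_
  have := sub_one_div_one_sub_div_pos hb₀ hbs
  gcongr
  exact hZ n x hx hxl
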